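/- A permutation of {1,...,m} is lsd (lexicographically smallest in its descent class) if and only if every ascent is a global ascent; dually, a permutation is lexicographically largest in its descent class if and only if every descent is a global descent. -/

import Mathlib

/-- `w` is a permutation word: a rearrangement of `[1,…,n]` where `n` is its length. -/
def IsPermWord (w : List ℕ) : Prop := w.Perm (List.range' 1 w.length)

/-- The descent set of a word `[a₁,…,aₘ]` : those `i ∈ {1,…,m−1}` with `aᵢ > a_{i+1}`. -/
def descSet (w : List ℕ) : Finset ℕ :=
  (Finset.Ioo 0 w.length).filter (fun i => w.getD i 0 < w.getD (i - 1) 0)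

/-- The `i`-th letter of a word (1-based). -/
def entry (σ : List ℕ) (i : ℕ) : ℕ := σ.getD (i - 1) 0

/-- `p` is an ascent of `σ` : `a_p < a_{p+1}`. -/
def IsAscent (σ : List ℕ) (p : ℕ) : Prop := entry σ p < entry σ (p + 1)

/-- `p` is a descent of `σ` : `a_p > a_{p+1}`. -/
def IsDescent (σ : List ℕ) (p : ℕ) : Prop := entry σ (p + 1) < entry σ p

/-- `p` is a global ascent of `σ` : `aᵢ < aⱼ` for all `i ≤ p < j`. -/
def IsGlobalAscent (σ : List ℕ) (p : ℕ) : Prop :=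
  ∀ i j : ℕ, 1 ≤ i → i ≤ p → p < j → j ≤ σ.length → entry σ i < entry σ j

/-- `p` is a global descent of `σ` : `aᵢ > aⱼ` for all `i ≤ p < j`. -/
def IsGlobalDescent (σ : List ℕ) (p : ℕ) : Prop :=
  ∀ i j : ℕ, 1 ≤ i → i ≤ p → p < j → j ≤ σ.length → entry σ j < entry σ i

/-- Lexicographic order on words. -/
def lexLE (σ τ : List ℕ) : Prop := σ = τ ∨ List.Lex (· < ·) σ τ

/-!
A permutation all of whose ascents are global is determined by its descent set: its maximal
decreasing runs are filled, from left to right, with consecutive blocks of values. Such a word is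
lexicographically below every permutation with the same descent set, by a pigeonhole count on the
decreasing run at the first position where the two differ; hence it is the lsd element of its
class. Complementation `aᵢ ↦ m + 1 - aᵢ` swaps ascents and descents and reverses the
lexicographic order, which turns the statement about lsd permutations into the one about lld
permutations.
-/

open Finset

lemma entry_eq_getElem {w : List ℕ} {q : ℕ} (hq : 1 ≤ q) (hqn : q ≤ w.length) :
    entry w q = w[q - 1] := by
  simp [entry, List.getD_eq_getElem?_getD,
    List.getElem?_eq_getElem (show q - 1 < w.length by omega)]

lemma mem_descSet {w : List ℕ} {i : ℕ} :
    i ∈ descSet w ↔ 0 < i ∧ i < w.length ∧ IsDescent w i := by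
  simp [descSet, IsDescent, entry, and_assoc]

lemma descSet_subset_Ioo (w : List ℕ) : descSet w ⊆ Ioo 0 w.length :=
  filter_subset _ _

lemma isPermWord_of_nodup {w : List ℕ} (hw : w.Nodup) (hmem : ∀ x ∈ w, 1 ≤ x ∧ x ≤ w.length) :
    IsPermWord w :=
  (hw.subperm fun x hx => List.mem_range'_1.2 (by have := hmem x hx; omega)).perm_of_length_le
    (by simp)

namespace IsPermWord

variable {σ : List ℕ} (hσ : IsPermWord σ)
include hσ

lemma nodup : σ.Nodup := hσ.nodup_iff.2 (List.nodup_range' 1)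

lemma mem_iff {x : ℕ} : x ∈ σ ↔ 1 ≤ x ∧ x ≤ σ.length := by
  rw [List.Perm.mem_iff hσ, List.mem_range'_1]
  omega

lemma entry_mem {q : ℕ} (hq : 1 ≤ q) (hqn : q ≤ σ.length) :
    1 ≤ entry σ q ∧ entry σ q ≤ σ.length :=
  hσ.mem_iff.1 (entry_eq_getElem hq hqn ▸ List.getElem_mem _)

lemma entry_injective {q q' : ℕ} (hq : 1 ≤ q) (hqn : q ≤ σ.length) (hq' : 1 ≤ q')
    (hqn' : q' ≤ σ.length) (h : entry σ q = entry σ q') : q = q' := by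
  rw [entry_eq_getElem hq hqn, entry_eq_getElem hq' hqn'] at h
  have := hσ.nodup.getElem_inj_iff.1 h
  omega

lemma exists_entry_eq {v : ℕ} (hv : 1 ≤ v) (hvn : v ≤ σ.length) :
    ∃ q, 1 ≤ q ∧ q ≤ σ.length ∧ entry σ q = v := by
  obtain ⟨i, hi, rfl⟩ := List.mem_iff_getElem.1 (hσ.mem_iff.2 ⟨hv, hvn⟩)
  exact ⟨i + 1, by omega, by omega, by simp [entry, hi]⟩

lemma isAscent_iff_not_isDescent {p : ℕ} (hp : 1 ≤ p) (hpn : p < σ.length) :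
    IsAscent σ p ↔ ¬ IsDescent σ p := by
  have := mt (hσ.entry_injective hp hpn.le (Nat.le_add_left 1 p) hpn)
  unfold IsAscent IsDescent
  omega

end IsPermWord

section Runs

variable (D : Finset ℕ)

lemma exists_ge_notMem (q : ℕ) : ∃ t, q ≤ t ∧ t ∉ D := by
  obtain ⟨t, ht⟩ := Infinite.exists_notMem_finset (D ∪ range q)
  simp only [mem_union, mem_range, not_or, not_lt] at ht
  exact ⟨t, ht.2, ht.1⟩

/- Read as a descent set, `D` makes the positions `runStart D q, …, runEnd D q` the maximal
decreasing run through `q`. -/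
def runEnd (q : ℕ) : ℕ := Nat.find (exists_ge_notMem D q)

def runStart (q : ℕ) : ℕ := Nat.findGreatest (· ∉ D) (q - 1) + 1

variable {D}

lemma le_runEnd (q : ℕ) : q ≤ runEnd D q := (Nat.find_spec (exists_ge_notMem D q)).1

lemma runEnd_notMem (q : ℕ) : runEnd D q ∉ D := (Nat.find_spec (exists_ge_notMem D q)).2

lemma mem_of_lt_runEnd {q t : ℕ} (hqt : q ≤ t) (ht : t < runEnd D q) : t ∈ D := by
  by_contra h
  exact Nat.find_min (exists_ge_notMem D q) ht ⟨hqt, h⟩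

lemma runEnd_le {q t : ℕ} (hqt : q ≤ t) (ht : t ∉ D) : runEnd D q ≤ t :=
  Nat.find_min' _ ⟨hqt, ht⟩

lemma runStart_le {q : ℕ} (hq : 1 ≤ q) : runStart D q ≤ q := by
  have := Nat.findGreatest_le (P := (· ∉ D)) (q - 1)
  unfold runStart
  omega

lemma runStart_sub_one_notMem (h0 : 0 ∉ D) (q : ℕ) : runStart D q - 1 ∉ D :=
  Nat.findGreatest_spec (P := (· ∉ D)) (Nat.zero_le _) h0

lemma le_runStart {q t : ℕ} (htq : t < q) (ht : t ∉ D) : t + 1 ≤ runStart D q :=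
  Nat.succ_le_succ (Nat.le_findGreatest (by omega) ht)

lemma runEnd_eq_of_Ico_subset {q q' : ℕ} (hqq' : q ≤ q') (hD : ∀ t, q ≤ t → t < q' → t ∈ D) :
    runEnd D q = runEnd D q' := by
  have h₁ : q' ≤ runEnd D q := by
    by_contra h
    exact runEnd_notMem q (hD _ (le_runEnd q) (by omega))
  exact le_antisymm (runEnd_le (by have := le_runEnd (D := D) q'; omega) (runEnd_notMem q'))
    (runEnd_le h₁ (runEnd_notMem q))

lemma runStart_eq_of_Ico_subset (h0 : 0 ∉ D) {q q' : ℕ} (hq : 1 ≤ q) (hqq' : q ≤ q')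
    (hD : ∀ t, q ≤ t → t < q' → t ∈ D) : runStart D q = runStart D q' := by
  have hq' := runStart_le (D := D) (show 1 ≤ q' by omega)
  have h₁ : runStart D q' - 1 < q := by
    by_contra h
    exact runStart_sub_one_notMem h0 q' (hD _ (by omega) (by unfold runStart at *; omega))
  have h₂ := le_runStart h₁ (runStart_sub_one_notMem h0 q')
  have h₃ := le_runStart (show runStart D q - 1 < q' by
    have := runStart_le (D := D) hq; unfold runStart at *; omega) (runStart_sub_one_notMem h0 q)
  unfold runStart at *
  omega

end Runs

section LsdWord

variable {D : Finset ℕ}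

-- The run `runStart D q, …, runEnd D q` receives the values `runStart D q, …, runEnd D q`
-- in decreasing order.
def lsdEntry (D : Finset ℕ) (q : ℕ) : ℕ := runStart D q + runEnd D q - q

def lsdWord (n : ℕ) (D : Finset ℕ) : List ℕ := (List.range' 1 n).map (lsdEntry D)

lemma runStart_le_lsdEntry (q : ℕ) : runStart D q ≤ lsdEntry D q := by
  have := le_runEnd (D := D) q
  unfold lsdEntry
  omega

lemma lsdEntry_le_runEnd {q : ℕ} (hq : 1 ≤ q) : lsdEntry D q ≤ runEnd D q := by
  have := runStart_le (D := D) hq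
  unfold lsdEntry
  omega

lemma lsdEntry_lt_of_notMem {q t q' : ℕ} (hq : 1 ≤ q) (hqt : q ≤ t) (htq' : t < q')
    (ht : t ∉ D) : lsdEntry D q < lsdEntry D q' :=
  calc lsdEntry D q ≤ runEnd D q := lsdEntry_le_runEnd hq
    _ ≤ t := runEnd_le hqt ht
    _ < runStart D q' := le_runStart htq' ht
    _ ≤ lsdEntry D q' := runStart_le_lsdEntry q'

lemma lsdEntry_add_of_Ico_subset (h0 : 0 ∉ D) {q q' : ℕ} (hq : 1 ≤ q) (hqq' : q ≤ q')
    (hD : ∀ t, q ≤ t → t < q' → t ∈ D) : lsdEntry D q' + (q' - q) = lsdEntry D q := by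
  have hs := runStart_eq_of_Ico_subset h0 hq hqq' hD
  have he := runEnd_eq_of_Ico_subset hqq' hD
  have := le_runEnd (D := D) q'
  have := runStart_le (D := D) hq
  unfold lsdEntry
  omega

lemma lsdEntry_injective (h0 : 0 ∉ D) {q q' : ℕ} (hq : 1 ≤ q) (hq' : 1 ≤ q')
    (h : lsdEntry D q = lsdEntry D q') : q = q' := by
  wlog hqq' : q < q' generalizing q q'
  · rcases Nat.lt_or_ge q' q with h' | h'
    · exact (this hq' hq h.symm h').symm
    · omega
  by_cases hD : ∀ t, q ≤ t → t < q' → t ∈ D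
  · have := lsdEntry_add_of_Ico_subset h0 hq hqq'.le hD
    omega
  · push Not at hD
    obtain ⟨t, hqt, htq', ht⟩ := hD
    exact absurd h (lsdEntry_lt_of_notMem hq hqt htq' ht).ne

variable {n : ℕ}

lemma length_lsdWord : (lsdWord n D).length = n := by simp [lsdWord]

lemma entry_lsdWord {q : ℕ} (hq : 1 ≤ q) (hqn : q ≤ n) :
    entry (lsdWord n D) q = lsdEntry D q := by
  rw [entry_eq_getElem hq (by rwa [length_lsdWord])]
  simp only [lsdWord, List.getElem_map, List.getElem_range']
  congr 1
  omega

variable (hD : D ⊆ Ioo 0 n)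
include hD

lemma lsdEntry_mem {q : ℕ} (hq : 1 ≤ q) (hqn : q ≤ n) :
    1 ≤ lsdEntry D q ∧ lsdEntry D q ≤ n := by
  have := runStart_le_lsdEntry (D := D) q
  have := lsdEntry_le_runEnd (D := D) hq
  have := runEnd_le (D := D) hqn (fun h => by simpa using hD h)
  unfold runStart at *
  omega

lemma zero_notMem_of_subset_Ioo : 0 ∉ D := fun h => by simpa using hD h

lemma isPermWord_lsdWord : IsPermWord (lsdWord n D) := by
  refine isPermWord_of_nodup ((List.nodup_range' 1).map_on fun q hq q' hq' h => ?_) ?_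
  · rw [List.mem_range'_1] at hq hq'
    exact lsdEntry_injective (zero_notMem_of_subset_Ioo hD) (by omega) (by omega) h
  · rw [length_lsdWord]
    simp only [lsdWord, List.mem_map, List.mem_range'_1]
    rintro _ ⟨q, hq, rfl⟩
    exact lsdEntry_mem hD (by omega) (by omega)

lemma descSet_lsdWord : descSet (lsdWord n D) = D := by
  ext i
  rw [mem_descSet, length_lsdWord]
  constructor
  · rintro ⟨hi, hin, hdesc⟩
    by_contra h
    rw [IsDescent, entry_lsdWord (by omega) hin, entry_lsdWord hi hin.le] at hdesc
    exact absurd hdesc (lsdEntry_lt_of_notMem hi le_rfl (Nat.lt_succ_self i) h).not_gt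
  · intro h
    obtain ⟨hi, hin⟩ := mem_Ioo.1 (hD h)
    refine ⟨hi, hin, ?_⟩
    have := lsdEntry_add_of_Ico_subset (zero_notMem_of_subset_Ioo hD) hi (Nat.le_succ i)
      (fun t ht ht' => by rwa [show t = i by omega])
    rw [IsDescent, entry_lsdWord (by omega) hin, entry_lsdWord hi hin.le]
    omega

lemma isGlobalAscent_lsdWord {p : ℕ} (hp : p ∈ Ioo 0 n) (hasc : IsAscent (lsdWord n D) p) :
    IsGlobalAscent (lsdWord n D) p := by
  rw [mem_Ioo] at hp
  have hpD : p ∉ D := fun h => by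
    rw [← descSet_lsdWord hD, mem_descSet] at h
    exact ((isPermWord_lsdWord hD).isAscent_iff_not_isDescent hp.1
      (by rw [length_lsdWord]; exact hp.2)).1 hasc h.2.2
  intro i j hi hip hpj hjn
  rw [length_lsdWord] at hjn
  rw [entry_lsdWord hi (by omega), entry_lsdWord (by omega) hjn]
  exact lsdEntry_lt_of_notMem hi hip hpj hpD

end LsdWord

section LexMinimal

lemma lexLE_iff_not_lt {σ τ : List ℕ} : lexLE σ τ ↔ ¬ τ < σ := by
  rw [not_lt, le_iff_eq_or_lt]
  rfl

lemma lexLE_antisymm {σ τ : List ℕ} (h : lexLE σ τ) (h' : lexLE τ σ) : σ = τ := by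
  rw [lexLE_iff_not_lt] at h h'
  exact (lt_trichotomy σ τ).resolve_left h' |>.resolve_right h

lemma entry_lt_of_Ico_subset_descSet {w : List ℕ} {q q' : ℕ} (hqq' : q < q')
    (hrun : ∀ t, q ≤ t → t < q' → t ∈ descSet w) : entry w q' < entry w q := by
  induction q', hqq' using Nat.le_induction with
  | base => exact (mem_descSet.1 (hrun q le_rfl (Nat.lt_succ_self q))).2.2
  | succ q' hqq' ih =>
    have hdesc : IsDescent w q' :=
      (mem_descSet.1 (hrun q' (by omega) (Nat.lt_succ_self q'))).2.2
    exact hdesc.trans (ih fun t ht ht' => hrun t ht (by omega))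

variable {σ τ : List ℕ} (hσ : IsPermWord σ) (hτ : IsPermWord τ) (hlen : τ.length = σ.length)
  (hdesc : descSet τ = descSet σ)
  (hglob : ∀ p ∈ Ioo 0 σ.length, IsAscent σ p → IsGlobalAscent σ p)
include hσ hτ hlen hdesc hglob

/- If `τ_p < σ_p`, then `τ_p > ⋯ > τ_s` along the decreasing run `p, …, s` of `σ` are `s - p + 1`
values, all missing from `σ_1, …, σ_p`, and all smaller than `σ_p`; since `s` is a global ascent
of `σ` (or `s = m`), such values can only sit at the `s - p` positions `p + 1, …, s` of `σ`. -/
lemma entry_le_of_forall_isGlobalAscent {p : ℕ} (hp : 1 ≤ p) (hpn : p ≤ σ.length)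
    (hagree : ∀ q, 1 ≤ q → q < p → entry τ q = entry σ q) : entry σ p ≤ entry τ p := by
  by_contra! hlt
  set s := runEnd (descSet σ) p
  have hps : p ≤ s := le_runEnd p
  have hsn : s ≤ σ.length := runEnd_le hpn fun h => by simpa using descSet_subset_Ioo σ h
  have hτrun : ∀ q, p ≤ q → q ≤ s → entry τ q ≤ entry τ p := fun q hpq hqs =>
    hpq.eq_or_lt.elim (fun h => h ▸ le_rfl) fun h => (entry_lt_of_Ico_subset_descSet h
      fun t ht ht' => hdesc ▸ mem_of_lt_runEnd ht (by omega)).le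
  have hσbig : ∀ j, s < j → j ≤ σ.length → entry σ p < entry σ j := fun j hsj hjn => by
    have hasc : IsAscent σ s := (hσ.isAscent_iff_not_isDescent (by omega) (by omega)).2
      fun h => runEnd_notMem p (mem_descSet.2 ⟨by omega, by omega, h⟩)
    exact hglob s (mem_Ioo.2 ⟨by omega, by omega⟩) hasc p j hp hps hsj hjn
  have himage : (Icc p s).image (entry τ) ⊆ (Ioc p s).image (entry σ) := by
    intro v hv
    obtain ⟨q, hq, rfl⟩ := mem_image.1 hv
    rw [mem_Icc] at hq
    have hτq := hτrun q hq.1 hq.2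
    obtain ⟨r, hr, hrn, hrq⟩ := hσ.exists_entry_eq (hτ.entry_mem (by omega) (by omega)).1
      ((hτ.entry_mem (q := q) (by omega) (by omega)).2.trans_eq hlen)
    refine mem_image.2 ⟨r, mem_Ioc.2 ⟨?_, ?_⟩, hrq⟩
    · by_contra! hrp
      rcases hrp.lt_or_eq with hrp | rfl
      · have := hτ.entry_injective hr (by omega) (by omega) (by omega)
          ((hagree r hr hrp).trans hrq)
        omega
      · omega
    · by_contra! hsr
      have := hσbig r hsr hrn
      omega
  have hinj : Set.InjOn (entry τ) (Icc p s) := fun q hq q' hq' h => by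
    rw [coe_Icc, Set.mem_Icc] at hq hq'
    exact hτ.entry_injective (by omega) (by omega) (by omega) (by omega) h
  have := calc s + 1 - p
      = ((Icc p s).image (entry τ)).card := by rw [card_image_of_injOn hinj, Nat.card_Icc]
    _ ≤ ((Ioc p s).image (entry σ)).card := card_le_card himage
    _ ≤ s - p := card_image_le.trans_eq (Nat.card_Ioc p s)
  omega

lemma lexLE_of_forall_isGlobalAscent : lexLE σ τ := by
  rw [lexLE_iff_not_lt, List.lt_iff_exists]
  rintro (⟨-, h⟩ | ⟨k, hkτ, hkσ, hagree, hlt⟩)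
  · omega
  · refine (entry_le_of_forall_isGlobalAscent hσ hτ hlen hdesc hglob (p := k + 1) (by omega)
      (by omega) fun q hq hqk => ?_).not_gt ?_
    · rw [entry_eq_getElem hq (by omega), entry_eq_getElem hq (by omega)]
      exact hagree (q - 1) (by omega)
    · simpa [entry, hkτ, hkσ] using hlt

end LexMinimal

def IsLsd (σ : List ℕ) : Prop :=
  ∀ τ : List ℕ, IsPermWord τ → τ.length = σ.length → descSet τ = descSet σ → lexLE σ τ

def IsLld (σ : List ℕ) : Prop :=
  ∀ τ : List ℕ, IsPermWord τ → τ.length = σ.length → descSet τ = descSet σ → lexLE τ σ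

theorem IsPermWord.isLsd_iff {σ : List ℕ} (hσ : IsPermWord σ) :
    IsLsd σ ↔ ∀ p ∈ Ioo 0 σ.length, IsAscent σ p → IsGlobalAscent σ p := by
  refine ⟨fun hlsd => ?_, fun hglob τ hτ hlen hdesc =>
    lexLE_of_forall_isGlobalAscent hσ hτ hlen hdesc hglob⟩
  have hD := descSet_subset_Ioo σ
  obtain ⟨μ, hμ, hμlen, hμdesc, hμglob⟩ : ∃ μ, IsPermWord μ ∧ μ.length = σ.length ∧
      descSet μ = descSet σ ∧ ∀ p ∈ Ioo 0 μ.length, IsAscent μ p → IsGlobalAscent μ p :=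
    ⟨_, isPermWord_lsdWord hD, length_lsdWord, descSet_lsdWord hD,
      length_lsdWord (D := descSet σ) ▸ fun _ hp => isGlobalAscent_lsdWord hD hp⟩
  obtain rfl : σ = μ := lexLE_antisymm (hlsd μ hμ hμlen hμdesc)
    (lexLE_of_forall_isGlobalAscent hμ hσ hμlen.symm hμdesc.symm hμglob)
  exact hμglob

def complement (w : List ℕ) : List ℕ := w.map (w.length + 1 - ·)

@[simp]
lemma length_complement (w : List ℕ) : (complement w).length = w.length := List.length_map _

lemma entry_complement {w : List ℕ} {q : ℕ} (hq : 1 ≤ q) (hqn : q ≤ w.length) :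
    entry (complement w) q = w.length + 1 - entry w q := by
  rw [entry_eq_getElem hq (by simpa using hqn), entry_eq_getElem hq hqn]
  simp [complement]

lemma map_tsub_lt_map_tsub_iff {N : ℕ} {l₁ l₂ : List ℕ} (hlen : l₁.length = l₂.length)
    (h₁ : ∀ x ∈ l₁, x ≤ N) (h₂ : ∀ x ∈ l₂, x ≤ N) :
    l₁.map (N - ·) < l₂.map (N - ·) ↔ l₂ < l₁ := by
  induction l₁ generalizing l₂ with
  | nil => cases l₂ <;> simp_all
  | cons a l₁ ih =>
    cases l₂ with
    | nil => simp at hlen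
    | cons b l₂ =>
      simp only [List.mem_cons, forall_eq_or_imp] at h₁ h₂
      simp only [List.map_cons, List.cons_lt_cons_iff,
        ih (by simpa using hlen) h₁.2 h₂.2]
      constructor <;> rintro (h | ⟨h, h'⟩)
      all_goals first | (left; omega) | (right; exact ⟨by omega, h'⟩)

lemma lexLE_complement_iff {σ τ : List ℕ} (hσ : IsPermWord σ) (hτ : IsPermWord τ)
    (hlen : τ.length = σ.length) : lexLE (complement σ) (complement τ) ↔ lexLE τ σ := by
  rw [lexLE_iff_not_lt, lexLE_iff_not_lt, complement, complement, hlen,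
    map_tsub_lt_map_tsub_iff hlen (fun x hx => by have := hτ.mem_iff.1 hx; omega)
      (fun x hx => by have := hσ.mem_iff.1 hx; omega)]

lemma isPermWord_complement {σ : List ℕ} (hσ : IsPermWord σ) : IsPermWord (complement σ) := by
  refine isPermWord_of_nodup (hσ.nodup.map_on fun x hx y hy h => ?_) fun x hx => ?_
  · have := hσ.mem_iff.1 hx
    have := hσ.mem_iff.1 hy
    omega
  · obtain ⟨y, hy, rfl⟩ := List.mem_map.1 hx
    have := hσ.mem_iff.1 hy
    simp only [length_complement]
    omega

namespace IsPermWord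

variable {σ : List ℕ} (hσ : IsPermWord σ)
include hσ

lemma complement_complement : complement (complement σ) = σ := by
  simp only [complement, List.length_map, List.map_map]
  refine (List.map_congr_left fun x hx => ?_).trans (List.map_id σ)
  have := hσ.mem_iff.1 hx
  simp only [Function.comp_apply, id]
  omega

lemma isAscent_complement_iff {p : ℕ} (hp : 1 ≤ p) (hpn : p < σ.length) :
    IsAscent (complement σ) p ↔ IsDescent σ p := by
  have := hσ.entry_mem hp hpn.le
  have := hσ.entry_mem (q := p + 1) (by omega) hpn
  rw [IsAscent, IsDescent, entry_complement hp hpn.le,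
    entry_complement (q := p + 1) (by omega) hpn]
  omega

lemma isDescent_complement_iff {p : ℕ} (hp : 1 ≤ p) (hpn : p < σ.length) :
    IsDescent (complement σ) p ↔ IsAscent σ p := by
  have := hσ.entry_mem hp hpn.le
  have := hσ.entry_mem (q := p + 1) (by omega) hpn
  rw [IsAscent, IsDescent, entry_complement hp hpn.le,
    entry_complement (q := p + 1) (by omega) hpn]
  omega

lemma descSet_complement : descSet (complement σ) = Ioo 0 σ.length \ descSet σ := by
  ext i
  simp only [mem_descSet, mem_sdiff, mem_Ioo, length_complement]
  constructor
  · rintro ⟨hi, hin, hdesc⟩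
    exact ⟨⟨hi, hin⟩, fun h => (hσ.isAscent_iff_not_isDescent hi hin).1
      ((hσ.isDescent_complement_iff hi hin).1 hdesc) h.2.2⟩
  · rintro ⟨⟨hi, hin⟩, hndesc⟩
    exact ⟨hi, hin, (hσ.isDescent_complement_iff hi hin).2
      ((hσ.isAscent_iff_not_isDescent hi hin).2 fun h => hndesc ⟨hi, hin, h⟩)⟩

lemma isGlobalAscent_complement_iff {p : ℕ} :
    IsGlobalAscent (complement σ) p ↔ IsGlobalDescent σ p := by
  simp only [IsGlobalAscent, IsGlobalDescent, length_complement]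
  refine forall₄_congr fun i j hi hip => forall₂_congr fun hpj hjn => ?_
  have := hσ.entry_mem hi (by omega)
  have := hσ.entry_mem (by omega) hjn
  rw [entry_complement hi (by omega), entry_complement (by omega) hjn]
  omega

lemma descSet_complement_eq {τ : List ℕ} (hτ : IsPermWord τ) (hlen : τ.length = σ.length)
    (hdesc : descSet τ = descSet σ) : descSet (complement τ) = descSet (complement σ) := by
  rw [hσ.descSet_complement, hτ.descSet_complement, hlen, hdesc]

end IsPermWord

lemma IsPermWord.isLld_iff_isLsd_complement {σ : List ℕ} (hσ : IsPermWord σ) :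
    IsLld σ ↔ IsLsd (complement σ) := by
  constructor
  · intro hlld τ hτ hlen hdesc
    rw [length_complement] at hlen
    have hτ' := isPermWord_complement hτ
    have hlen' : (complement τ).length = σ.length := by rw [length_complement, hlen]
    have hdesc' : descSet (complement τ) = descSet σ := by
      rw [(isPermWord_complement hσ).descSet_complement_eq hτ
          (by rw [hlen, length_complement]) hdesc,
        hσ.complement_complement]
    rw [← hτ.complement_complement, lexLE_complement_iff hσ hτ' hlen']
    exact hlld _ hτ' hlen' hdesc'
  · intro hlsd τ hτ hlen hdesc
    rw [← lexLE_complement_iff hσ hτ hlen]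
    exact hlsd _ (isPermWord_complement hτ) (by simp [hlen])
      (hσ.descSet_complement_eq hτ hlen hdesc)

theorem IsPermWord.isLld_iff {σ : List ℕ} (hσ : IsPermWord σ) :
    IsLld σ ↔ ∀ p ∈ Ioo 0 σ.length, IsDescent σ p → IsGlobalDescent σ p := by
  rw [hσ.isLld_iff_isLsd_complement, (isPermWord_complement hσ).isLsd_iff, length_complement]
  refine forall₂_congr fun p hp => ?_
  rw [mem_Ioo] at hp
  rw [hσ.isAscent_complement_iff hp.1 hp.2, hσ.isGlobalAscent_complement_iff]

/-- A permutation word is lexicographically smallest in its descent class (lsd) iff every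
ascent is a global ascent; dually it is lexicographically largest in its descent class
(lld) iff every descent is a global descent. -/
theorem stmt14 (σ : List ℕ) (hσ : IsPermWord σ) :
    ((∀ τ : List ℕ, IsPermWord τ → τ.length = σ.length → descSet τ = descSet σ →
        lexLE σ τ) ↔
      (∀ p ∈ Finset.Ioo 0 σ.length, IsAscent σ p → IsGlobalAscent σ p)) ∧
    ((∀ τ : List ℕ, IsPermWord τ → τ.length = σ.length → descSet τ = descSet σ →
        lexLE τ σ) ↔
      (∀ p ∈ Finset.Ioo 0 σ.length, IsDescent σ p → IsGlobalDescent σ p)) :=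
  ⟨hσ.isLsd_iff, hσ.isLld_iff⟩
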